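/- arXiv:2507.01998 — 5 statements merged into one kernel-verified Lean document; each statement's English description precedes it below -/
import Mathlib

section
/- Let S = (U, C ∪ {d}) be a decision table and let S' = (U', C ∪ {d}) be a non-trivial POS-table of S. Then for every object x ∈ U there exists an object y ∈ U' such that the ordered pair (x, y) belongs to EPD^S. -/
/-- Objects `x y` are `R`-indiscernible: all attributes in `R` agree on them. -/
def Indis {U A V : Type*} (val : A → U → V) (R : Finset A) (x y : U) : Prop :=
  ∀ a ∈ R, val a x = val a y

/-- Positive region of the decision `d` w.r.t. attribute set `R` over universe `Univ`. -/
def POSreg {U A V Vd : Type*} (val : A → U → V) (R : Finset A) (d : U → Vd)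
    (Univ : Set U) : Set U :=
  {x ∈ Univ | ∀ y ∈ Univ, Indis val R x y → d y = d x}

/-- The set of ordered pairs of objects that should be distinguished. -/
def EPD {U A V Vd : Type*} (val : A → U → V) (C : Finset A) (d : U → Vd)
    (Univ : Set U) : Set (U × U) :=
  {p | p.1 ∈ Univ ∧ p.2 ∈ Univ ∧
    ((p.1 ∈ POSreg val C d Univ ∧ p.2 ∉ POSreg val C d Univ) ∨
     (p.2 ∈ POSreg val C d Univ ∧ p.1 ∉ POSreg val C d Univ) ∨
     (p.1 ∈ POSreg val C d Univ ∧ p.2 ∈ POSreg val C d Univ ∧ d p.1 ≠ d p.2))}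

/-- The elements of `EPD` discernible using attribute subset `B`. -/
def EPDb {U A V Vd : Type*} (val : A → U → V) (C B : Finset A) (d : U → Vd)
    (Univ : Set U) : Set (U × U) :=
  {p ∈ EPD val C d Univ | ∃ a ∈ B, val a p.1 ≠ val a p.2}

/-- Discernibility quality of `B`. -/
noncomputable def DQ {U A V Vd : Type*} (val : A → U → V) (C B : Finset A) (d : U → Vd)
    (Univ : Set U) : ℝ :=
  ((EPDb val C B d Univ).ncard : ℝ) / ((EPD val C d Univ).ncard : ℝ)

/-- If `S'` is a non-trivial POS-table of `S`, then every object `x ∈ U` can be paired with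
some `y ∈ U'` so that `(x, y) ∈ EPD^S`. -/
theorem stmt_0 {U A V Vd : Type*} [Fintype U] [Nonempty U]
    (val : A → U → V) (C : Finset A) (d : U → Vd)
    (U' : Set U)
    (hPOS : POSreg val C d U' ⊆ POSreg val C d Set.univ)
    (hNonempty : (POSreg val C d U').Nonempty)
    (hTwoVals : ∃ x ∈ U', ∃ y ∈ U', d x ≠ d y) :
    ∀ x : U, ∃ y ∈ U', (x, y) ∈ EPD val C d Set.univ := by
  intro x
  obtain ⟨z, hz⟩ := hNonempty
  have hzU' : z ∈ U' := hz.1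
  have hzPOS : z ∈ POSreg val C d Set.univ := hPOS hz
  by_cases hx : x ∈ POSreg val C d Set.univ
  · obtain ⟨a, haU', b, hbU', hab⟩ := hTwoVals
    by_cases ha : a ∈ POSreg val C d Set.univ
    · by_cases hb : b ∈ POSreg val C d Set.univ
      · by_cases hxa : d x = d a
        · exact ⟨b, hbU', Set.mem_univ _, Set.mem_univ _,
            Or.inr (Or.inr ⟨hx, hb, by rw [hxa]; exact hab⟩)⟩
        · exact ⟨a, haU', Set.mem_univ _, Set.mem_univ _,
            Or.inr (Or.inr ⟨hx, ha, hxa⟩)⟩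
      · exact ⟨b, hbU', Set.mem_univ _, Set.mem_univ _, Or.inl ⟨hx, hb⟩⟩
    · exact ⟨a, haU', Set.mem_univ _, Set.mem_univ _, Or.inl ⟨hx, ha⟩⟩
  · exact ⟨z, hzU', Set.mem_univ _, Set.mem_univ _, Or.inr (Or.inl ⟨hzPOS, hx⟩)⟩
end

section
/- Let S = (U, C ∪ {d}) be a decision table, let S' = (U', C ∪ {d}) be a non-trivial POS-table of S, and let T ⊆ U be any finite set of objects. Then the set {(x, y) ∈ EPD^S : x ∈ T and y ∈ U'} has cardinality at least |T|; in other words, any |T| distinct objects introduce at least |T| distinct elements of EPD^S paired with objects of U'. -/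
/-- If `S'` is a non-trivial POS-table of `S` and `T ⊆ U` is any finite set of objects,
then `{(x, y) ∈ EPD^S : x ∈ T ∧ y ∈ U'}` has cardinality at least `|T|`. -/
theorem stmt_1 {U A V Vd : Type*} [Fintype U] [Nonempty U]
    (val : A → U → V) (C : Finset A) (d : U → Vd)
    (U' : Set U)
    (hPOS : POSreg val C d U' ⊆ POSreg val C d Set.univ)
    (hNonempty : (POSreg val C d U').Nonempty)
    (hTwoVals : ∃ x ∈ U', ∃ y ∈ U', d x ≠ d y)
    (T : Finset U) :
    T.card ≤ {p ∈ EPD val C d Set.univ | p.1 ∈ T ∧ p.2 ∈ U'}.ncard := by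
  obtain ⟨z, hz⟩ := hNonempty
  have hzU' : z ∈ U' := hz.1
  have hzPOS : z ∈ POSreg val C d Set.univ := hPOS hz
  have key : ∀ x : U, ∃ y ∈ U', (x, y) ∈ EPD val C d Set.univ := by
    intro x
    by_cases hx : x ∈ POSreg val C d Set.univ
    · obtain ⟨u, hu, v, hv, huv⟩ := hTwoVals
      by_cases hu' : u ∈ POSreg val C d Set.univ
      · by_cases hv' : v ∈ POSreg val C d Set.univ
        · by_cases hxu : d x = d u
          · exact ⟨v, hv, Set.mem_univ _, Set.mem_univ _,
              Or.inr (Or.inr ⟨hx, hv', by simpa [hxu] using huv⟩)⟩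
          · exact ⟨u, hu, Set.mem_univ _, Set.mem_univ _,
              Or.inr (Or.inr ⟨hx, hu', hxu⟩)⟩
        · exact ⟨v, hv, Set.mem_univ _, Set.mem_univ _, Or.inl ⟨hx, hv'⟩⟩
      · exact ⟨u, hu, Set.mem_univ _, Set.mem_univ _, Or.inl ⟨hx, hu'⟩⟩
    · exact ⟨z, hzU', Set.mem_univ _, Set.mem_univ _, Or.inr (Or.inl ⟨hzPOS, hx⟩)⟩
  choose f hf1 hf2 using key
  set S : Set (U × U) := {p ∈ EPD val C d Set.univ | p.1 ∈ T ∧ p.2 ∈ U'} with hS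
  have hsub : (fun x => (x, f x)) '' (T : Set U) ⊆ S := by
    rintro p ⟨x, hx, rfl⟩
    exact ⟨hf2 x, hx, hf1 x⟩
  have hinj : Set.InjOn (fun x => (x, f x)) (T : Set U) := by
    intro a _ b _ h
    exact congrArg Prod.fst h
  calc T.card = ((T : Set U)).ncard := (Set.ncard_coe_finset T).symm
    _ = ((fun x => (x, f x)) '' (T : Set U)).ncard :=
        (Set.ncard_image_of_injOn hinj).symm
    _ ≤ S.ncard := Set.ncard_le_ncard hsub (Set.toFinite S)
end

section
/- Let S = (U, C ∪ {d}) be a decision table and B ⊆ C. Then EPD^S_B = EPD^S if and only if POS^S_B(d) = POS^S_C(d); that is, an attribute subset discerns every element of EPD^S exactly when it preserves the positive region of the full condition attribute set. -/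
/-- An attribute subset discerns every element of `EPD^S` exactly when it preserves the
positive region of the full condition attribute set. -/
theorem stmt_4 {U A V Vd : Type*} [Fintype U] [Nonempty U]
    (val : A → U → V) (C : Finset A) (d : U → Vd)
    (B : Finset A) (hB : B ⊆ C) :
    EPDb val C B d Set.univ = EPD val C d Set.univ ↔
      POSreg val B d Set.univ = POSreg val C d Set.univ := by
  constructor
  · intro h
    have hBC : POSreg val B d Set.univ ⊆ POSreg val C d Set.univ := by
      intro x hx
      exact ⟨trivial, fun y _ hxy => hx.2 y trivial (fun a ha => hxy a (hB ha))⟩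
    refine Set.Subset.antisymm hBC ?_
    intro x hx
    refine ⟨trivial, fun y _ hxy => ?_⟩
    by_cases hy : y ∈ POSreg val C d Set.univ
    · by_contra hdy
      have hmem : (x, y) ∈ EPD val C d Set.univ :=
        ⟨trivial, trivial, Or.inr (Or.inr ⟨hx, hy, fun he => hdy he.symm⟩)⟩
      rw [← h] at hmem
      obtain ⟨a, haB, hne⟩ := hmem.2
      exact hne (hxy a haB)
    · have hmem : (x, y) ∈ EPD val C d Set.univ :=
        ⟨trivial, trivial, Or.inl ⟨hx, hy⟩⟩
      rw [← h] at hmem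
      obtain ⟨a, haB, hne⟩ := hmem.2
      exact absurd (hxy a haB) hne
  · intro h
    ext ⟨x, y⟩
    constructor
    · exact fun hp => hp.1
    · intro hp
      refine ⟨hp, ?_⟩
      by_contra hcon
      push_neg at hcon
      have hxy : Indis val B x y := fun a ha => hcon a ha
      obtain ⟨-, -, hcase⟩ := hp
      rcases hcase with ⟨hx, hy⟩ | ⟨hy, hx⟩ | ⟨hx, hy, hd⟩
      · rw [← h] at hx hy
        apply hy
        refine ⟨trivial, fun z _ hyz => ?_⟩
        have hxz : Indis val B x z := fun a ha => (hxy a ha).trans (hyz a ha)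
        exact (hx.2 z trivial hxz).trans (hx.2 y trivial hxy).symm
      · rw [← h] at hx hy
        apply hx
        have hyx : Indis val B y x := fun a ha => (hxy a ha).symm
        refine ⟨trivial, fun z _ hxz => ?_⟩
        have hyz : Indis val B y z := fun a ha => (hyx a ha).trans (hxz a ha)
        exact (hy.2 z trivial hyz).trans (hy.2 x trivial hyx).symm
      · rw [← h] at hx
        exact hd (hx.2 y trivial hxy).symm
end

section
/- Let S = (U, C ∪ {d}) be a decision table and let B ⊆ C be a positive region reduct of S. Then EPD^S_B = EPD^S (so DQ_S(B) = 1), and for every proper subset B' ⊊ B one has EPD^S_{B'} ⊊ EPD^S (so DQ_S(B') < 1 whenever EPD^S ≠ ∅). -/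
/-- A positive region reduct `B` satisfies `EPD^S_B = EPD^S` (so `DQ_S(B) = 1`), while every
proper subset `B' ⊊ B` satisfies `EPD^S_{B'} ⊊ EPD^S` (so `DQ_S(B') < 1` when `EPD^S ≠ ∅`). -/
theorem stmt_5 {U A V Vd : Type*} [Fintype U] [Nonempty U]
    (val : A → U → V) (C : Finset A) (d : U → Vd)
    (B : Finset A) (hB : B ⊆ C)
    (hPos : POSreg val B d Set.univ = POSreg val C d Set.univ)
    (hMin : ∀ B' ⊂ B, POSreg val B' d Set.univ ≠ POSreg val C d Set.univ) :
    (EPDb val C B d Set.univ = EPD val C d Set.univ ∧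
      ((EPD val C d Set.univ).Nonempty → DQ val C B d Set.univ = 1)) ∧
    ∀ B' ⊂ B, EPDb val C B' d Set.univ ⊂ EPD val C d Set.univ ∧
      ((EPD val C d Set.univ).Nonempty → DQ val C B' d Set.univ < 1) := by

  classical
  have hfin : (EPD val C d (Set.univ : Set U)).Finite := Set.toFinite _
  have step : ∀ x y : U, Indis val B x y → x ∈ POSreg val B d (Set.univ : Set U) →
      y ∈ POSreg val B d (Set.univ : Set U) ∧ d y = d x := by
    intro x y hxy hx
    have hdyx : d y = d x := hx.2 y (Set.mem_univ y) hxy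
    refine ⟨⟨Set.mem_univ y, fun z hz hyz => ?_⟩, hdyx⟩
    have hdz : d z = d x := hx.2 z hz (fun a ha => (hxy a ha).trans (hyz a ha))
    rw [hdz, hdyx]
  have key : ∀ p ∈ EPD val C d (Set.univ : Set U), ∃ a ∈ B, val a p.1 ≠ val a p.2 := by
    intro p hp
    by_contra h
    push_neg at h
    have hind : Indis val B p.1 p.2 := fun a ha => h a ha
    have hind' : Indis val B p.2 p.1 := fun a ha => (h a ha).symm
    simp only [EPD, Set.mem_setOf_eq, ← hPos] at hp
    rcases hp with ⟨-, -, h1 | h2 | h3⟩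
    · exact h1.2 (step p.1 p.2 hind h1.1).1
    · exact h2.2 (step p.2 p.1 hind' h2.1).1
    · exact h3.2.2 ((step p.1 p.2 hind h3.1).2).symm
  have hEq : EPDb val C B d (Set.univ : Set U) = EPD val C d Set.univ := by
    ext p
    exact ⟨fun hp => hp.1, fun hp => ⟨hp, key p hp⟩⟩
  refine ⟨⟨hEq, fun hne => ?_⟩, fun B' hB' => ?_⟩
  · have hpos : 0 < (EPD val C d (Set.univ : Set U)).ncard :=
      (Set.ncard_pos hfin).mpr hne
    rw [DQ, hEq, div_self]
    exact_mod_cast hpos.ne'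
  · -- proper subset part
    have hmono : POSreg val B' d (Set.univ : Set U) ⊆ POSreg val C d Set.univ := by
      intro x hx
      exact ⟨hx.1, fun y hy hind => hx.2 y hy (fun a ha => hind a (hB (hB'.1 ha)))⟩
    have hne' := hMin B' hB'
    obtain ⟨x, hxC, hxB'⟩ := Set.exists_of_ssubset (lt_of_le_of_ne hmono hne')
    have : ∃ y, Indis val B' x y ∧ d y ≠ d x := by
      by_contra hcon
      push_neg at hcon
      exact hxB' ⟨Set.mem_univ x, fun y _ hind => hcon y hind⟩
    obtain ⟨y, hxy, hdy⟩ := this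
    have hpEPD : (x, y) ∈ EPD val C d (Set.univ : Set U) := by
      refine ⟨Set.mem_univ x, Set.mem_univ y, ?_⟩
      by_cases hyC : y ∈ POSreg val C d (Set.univ : Set U)
      · exact Or.inr (Or.inr ⟨hxC, hyC, fun h => hdy h.symm⟩)
      · exact Or.inl ⟨hxC, hyC⟩
    have hpNot : (x, y) ∉ EPDb val C B' d (Set.univ : Set U) := by
      rintro ⟨-, a, ha, hne2⟩
      exact hne2 (hxy a ha)
    have hss : EPDb val C B' d (Set.univ : Set U) ⊂ EPD val C d Set.univ := by
      refine ⟨fun p hp => hp.1, fun hsub => hpNot (hsub hpEPD)⟩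
    refine ⟨hss, fun hne => ?_⟩
    have hlt : (EPDb val C B' d (Set.univ : Set U)).ncard <
        (EPD val C d (Set.univ : Set U)).ncard := Set.ncard_lt_ncard hss hfin
    have hpos : 0 < (EPD val C d (Set.univ : Set U)).ncard := (Set.ncard_pos hfin).mpr hne
    rw [DQ, div_lt_one (by exact_mod_cast hpos)]
    exact_mod_cast hlt
end

section
/- Fix a real number z > 0 and define, for real t ≥ 50, 𝒫(t) = (2t + z² − √((2t + z²)² − 4(t + z² + 1) t² / (t + 1))) / (2(t + z² + 1)). Then 𝒫 is strictly monotonically increasing on [50, ∞); i.e. for all 50 ≤ t₁ < t₂ one has 𝒫(t₁) < 𝒫(t₂). -/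
private lemma stmt14_cancel {a c : ℝ} (hc : 0 < c) (h : 0 < a * c) : 0 < a := by
  by_contra hn
  push_neg at hn
  nlinarith

private lemma stmt14_Dpos (z t D : ℝ) (hz2 : 0 < z ^ 2) (h50 : 50 ≤ t)
    (halt : D * (t + 1) = z ^ 4 * (t + 1) + 4 * t * z ^ 2) : 0 < D := by
  have ht : (0:ℝ) < t + 1 := by linarith
  apply stmt14_cancel ht
  rw [halt]
  nlinarith [sq_nonneg (z ^ 2)]

private lemma stmt14_slt (b s : ℝ) (hsq : s ^ 2 < b ^ 2) (hb : 0 ≤ b) : s < b :=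
  lt_of_pow_lt_pow_left₀ 2 hb hsq

private lemma stmt14_s1sqlt (z t s D : ℝ) (hz2 : 0 < z ^ 2) (h50 : 50 ≤ t)
    (hsq : s ^ 2 = D)
    (hm : D * (t + 1) = (2 * t + z ^ 2) ^ 2 * (t + 1) - 4 * (t + z ^ 2 + 1) * t ^ 2) :
    s ^ 2 < (2 * t + z ^ 2) ^ 2 := by
  have ht : (0:ℝ) < t + 1 := by linarith
  have h : 0 < ((2 * t + z ^ 2) ^ 2 - s ^ 2) * (t + 1) := by
    rw [hsq]
    nlinarith [hm, hz2, h50]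
  exact sub_pos.mp (stmt14_cancel ht h)

private lemma stmt14_Plt1 (z t P s : ℝ) (hz2 : 0 < z ^ 2) (h50 : 50 ≤ t)
    (hPeq : 2 * (t + z ^ 2 + 1) * P = 2 * t + z ^ 2 - s) (hs : 0 < s) :
    (t + 1) * P < t := by
  have ht : (0:ℝ) < t + 1 := by linarith
  have hA : (0:ℝ) < 2 * (t + z ^ 2 + 1) := by linarith
  have h : 2 * (t + z ^ 2 + 1) * ((t + 1) * P) = (t + 1) * (2 * t + z ^ 2) - (t + 1) * s := by
    linear_combination (t + 1) * hPeq
  have hs' : 0 < (t + 1) * s := mul_pos ht hs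
  have hzq : 0 < z ^ 2 * t - z ^ 2 := by nlinarith
  have h2 : 2 * (t + z ^ 2 + 1) * ((t + 1) * P) < 2 * (t + z ^ 2 + 1) * t := by nlinarith
  exact (mul_lt_mul_iff_right₀ hA).mp h2

private lemma stmt14_q2pos (z t₁ t₂ P : ℝ) (hz2 : 0 < z ^ 2) (h50 : 50 ≤ t₁) (hlt : t₁ < t₂)
    (hq1 : (t₁ + 1) * ((t₁ + z ^ 2 + 1) * P ^ 2 - (2 * t₁ + z ^ 2) * P) + t₁ ^ 2 = 0)
    (hPlt1 : (t₁ + 1) * P < t₁) :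
    0 < (t₂ + 1) * ((t₂ + z ^ 2 + 1) * P ^ 2 - (2 * t₂ + z ^ 2) * P) + t₂ ^ 2 := by
  have ht1 : (0:ℝ) < t₁ + 1 := by linarith
  have hP1 : P < 1 := by nlinarith
  have h1 : 1 < (t₁ + 1) * (1 - P) := by nlinarith
  have h1b : 1 < (t₂ + 1) * (1 - P) := by
    nlinarith [mul_pos (show (0:ℝ) < t₂ - t₁ by linarith) (show (0:ℝ) < 1 - P by linarith)]
  have h2 : 1 < (t₁ + 1) * (t₂ + 1) * (P - 1) ^ 2 := by nlinarith
  apply stmt14_cancel (show (0:ℝ) < t₁ + 1 from ht1)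
  have e : ((t₂ + 1) * ((t₂ + z ^ 2 + 1) * P ^ 2 - (2 * t₂ + z ^ 2) * P) + t₂ ^ 2) * (t₁ + 1)
      = (t₂ + 1) * ((t₁ + 1) * ((t₁ + z ^ 2 + 1) * P ^ 2 - (2 * t₁ + z ^ 2) * P) + t₁ ^ 2)
        + (t₂ - t₁) * ((t₁ + 1) * (t₂ + 1) * (P - 1) ^ 2 - 1) := by ring
  rw [e, hq1]
  nlinarith [mul_pos (show (0:ℝ) < t₂ - t₁ by linarith)
    (show (0:ℝ) < (t₁ + 1) * (t₂ + 1) * (P - 1) ^ 2 - 1 by linarith)]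

private lemma stmt14_vert (z t₁ t₂ P s₁ : ℝ) (hz2 : 0 < z ^ 2) (h50 : 50 ≤ t₁) (hlt : t₁ < t₂)
    (hPeq : 2 * (t₁ + z ^ 2 + 1) * P = 2 * t₁ + z ^ 2 - s₁) (hs1pos : 0 < s₁)
    (hPpos : 0 < P) :
    0 < 2 * t₂ + z ^ 2 - 2 * (t₂ + z ^ 2 + 1) * P := by
  have hA1 : (0:ℝ) < t₁ + z ^ 2 + 1 := by linarith
  have hA2 : (0:ℝ) < t₂ + z ^ 2 + 1 := by linarith
  have h1 : 2 * (t₁ + z ^ 2 + 1) * P < 2 * t₁ + z ^ 2 := by linarith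
  have h3 : (t₂ + z ^ 2 + 1) * (2 * (t₁ + z ^ 2 + 1) * P)
      < (t₂ + z ^ 2 + 1) * (2 * t₁ + z ^ 2) := mul_lt_mul_of_pos_left h1 hA2
  have h4 : 0 < (2 * t₂ + z ^ 2 - 2 * (t₂ + z ^ 2 + 1) * P) * (t₁ + z ^ 2 + 1) := by
    nlinarith [mul_pos (show (0:ℝ) < t₂ - t₁ by linarith) (show (0:ℝ) < z ^ 2 + 2 by linarith)]
  exact stmt14_cancel hA1 h4

/-- The lower bound `𝒫(t)` on discernibility quality from the paper's Theorem 1 is strictly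
monotonically increasing in the number `t ≥ 50` of additional random objects. -/
theorem stmt_14 (z : ℝ) (hz : 0 < z) :
    ∀ t₁ t₂ : ℝ, 50 ≤ t₁ → t₁ < t₂ →
      (2 * t₁ + z ^ 2 -
          Real.sqrt ((2 * t₁ + z ^ 2) ^ 2 - 4 * (t₁ + z ^ 2 + 1) * t₁ ^ 2 / (t₁ + 1))) /
        (2 * (t₁ + z ^ 2 + 1)) <
      (2 * t₂ + z ^ 2 -
          Real.sqrt ((2 * t₂ + z ^ 2) ^ 2 - 4 * (t₂ + z ^ 2 + 1) * t₂ ^ 2 / (t₂ + 1))) /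
        (2 * (t₂ + z ^ 2 + 1)) := by
  intro t₁ t₂ h50 hlt
  have h50' : (50:ℝ) ≤ t₂ := by linarith
  have ht1 : (0:ℝ) < t₁ + 1 := by linarith
  have ht2 : (0:ℝ) < t₂ + 1 := by linarith
  have hz2 : (0:ℝ) < z ^ 2 := by positivity
  have hA1 : (0:ℝ) < t₁ + z ^ 2 + 1 := by linarith
  have hA2 : (0:ℝ) < t₂ + z ^ 2 + 1 := by linarith
  obtain ⟨D₁, hD₁def⟩ : ∃ x : ℝ,
      x = (2 * t₁ + z ^ 2) ^ 2 - 4 * (t₁ + z ^ 2 + 1) * t₁ ^ 2 / (t₁ + 1) := ⟨_, rfl⟩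
  obtain ⟨D₂, hD₂def⟩ : ∃ x : ℝ,
      x = (2 * t₂ + z ^ 2) ^ 2 - 4 * (t₂ + z ^ 2 + 1) * t₂ ^ 2 / (t₂ + 1) := ⟨_, rfl⟩
  rw [← hD₁def, ← hD₂def]
  have hD1m : D₁ * (t₁ + 1)
      = (2 * t₁ + z ^ 2) ^ 2 * (t₁ + 1) - 4 * (t₁ + z ^ 2 + 1) * t₁ ^ 2 := by
    rw [hD₁def]; field_simp
  have hD2m : D₂ * (t₂ + 1)
      = (2 * t₂ + z ^ 2) ^ 2 * (t₂ + 1) - 4 * (t₂ + z ^ 2 + 1) * t₂ ^ 2 := by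
    rw [hD₂def]; field_simp
  have hD1alt : D₁ * (t₁ + 1) = z ^ 4 * (t₁ + 1) + 4 * t₁ * z ^ 2 := by rw [hD1m]; ring
  have hD2alt : D₂ * (t₂ + 1) = z ^ 4 * (t₂ + 1) + 4 * t₂ * z ^ 2 := by rw [hD2m]; ring
  have hD1pos : 0 < D₁ := stmt14_Dpos z t₁ D₁ hz2 h50 hD1alt
  have hD2pos : 0 < D₂ := stmt14_Dpos z t₂ D₂ hz2 h50' hD2alt
  obtain ⟨s₁, hs₁def⟩ : ∃ x : ℝ, x = Real.sqrt D₁ := ⟨_, rfl⟩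
  obtain ⟨s₂, hs₂def⟩ : ∃ x : ℝ, x = Real.sqrt D₂ := ⟨_, rfl⟩
  rw [← hs₁def, ← hs₂def]
  have hs1sq : s₁ ^ 2 = D₁ := by rw [hs₁def]; exact Real.sq_sqrt hD1pos.le
  have hs2sq : s₂ ^ 2 = D₂ := by rw [hs₂def]; exact Real.sq_sqrt hD2pos.le
  have hs1pos : 0 < s₁ := by rw [hs₁def]; exact Real.sqrt_pos.mpr hD1pos
  have hs2pos : 0 < s₂ := by rw [hs₂def]; exact Real.sqrt_pos.mpr hD2pos
  obtain ⟨P, hPdef⟩ : ∃ x : ℝ,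
      x = (2 * t₁ + z ^ 2 - s₁) / (2 * (t₁ + z ^ 2 + 1)) := ⟨_, rfl⟩
  rw [← hPdef]
  have hPeq : 2 * (t₁ + z ^ 2 + 1) * P = 2 * t₁ + z ^ 2 - s₁ := by
    rw [hPdef]; field_simp
  have hs1sqlt : s₁ ^ 2 < (2 * t₁ + z ^ 2) ^ 2 := stmt14_s1sqlt z t₁ s₁ D₁ hz2 h50 hs1sq hD1m
  have hs1lt : s₁ < 2 * t₁ + z ^ 2 := stmt14_slt _ _ hs1sqlt (by linarith)
  have hPpos : 0 < P := by
    rw [hPdef]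
    exact div_pos (by linarith) (by linarith)
  have hPlt1 : (t₁ + 1) * P < t₁ := stmt14_Plt1 z t₁ P s₁ hz2 h50 hPeq hs1pos
  -- the quadratic equation satisfied by P, multiplied through by (t₁+1)
  have hq1 : (t₁ + 1) * ((t₁ + z ^ 2 + 1) * P ^ 2 - (2 * t₁ + z ^ 2) * P) + t₁ ^ 2 = 0 := by
    have hsq : (2 * t₁ + z ^ 2 - 2 * (t₁ + z ^ 2 + 1) * P) ^ 2 = D₁ := by
      rw [← hs1sq, hPeq]; ring
    have hbig : 4 * (t₁ + z ^ 2 + 1) *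
        ((t₁ + 1) * ((t₁ + z ^ 2 + 1) * P ^ 2 - (2 * t₁ + z ^ 2) * P) + t₁ ^ 2) = 0 := by
      linear_combination (t₁ + 1) * hsq + hD1m
    have h4A : (4 * (t₁ + z ^ 2 + 1) : ℝ) ≠ 0 := by positivity
    rcases mul_eq_zero.mp hbig with h | h
    · exact absurd h h4A
    · exact h
  have hkey : 0 < (t₂ + 1) * ((t₂ + z ^ 2 + 1) * P ^ 2 - (2 * t₂ + z ^ 2) * P) + t₂ ^ 2 :=
    stmt14_q2pos z t₁ t₂ P hz2 h50 hlt hq1 hPlt1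
  have hvert : 0 < 2 * t₂ + z ^ 2 - 2 * (t₂ + z ^ 2 + 1) * P :=
    stmt14_vert z t₁ t₂ P s₁ hz2 h50 hlt hPeq hs1pos hPpos
  have hs2lt : s₂ < 2 * t₂ + z ^ 2 - 2 * (t₂ + z ^ 2 + 1) * P := by
    rw [hs₂def]
    apply (Real.sqrt_lt' hvert).mpr
    have hid : ((2 * t₂ + z ^ 2 - 2 * (t₂ + z ^ 2 + 1) * P) ^ 2 - D₂) * (t₂ + 1)
        = 4 * (t₂ + z ^ 2 + 1) *
          ((t₂ + 1) * ((t₂ + z ^ 2 + 1) * P ^ 2 - (2 * t₂ + z ^ 2) * P) + t₂ ^ 2) := by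
      linear_combination -hD2m
    have h5 : 0 < ((2 * t₂ + z ^ 2 - 2 * (t₂ + z ^ 2 + 1) * P) ^ 2 - D₂) * (t₂ + 1) := by
      rw [hid]
      exact mul_pos (by linarith) hkey
    have := stmt14_cancel ht2 h5
    linarith
  rw [lt_div_iff₀ (by linarith : (0:ℝ) < 2 * (t₂ + z ^ 2 + 1))]
  linarith [hs2lt]
end
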